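/- Let Q₁ := −e₁₄−e₂₃+2e₅₇, Q₂ := −e₁₃+e₂₄+2e₆₇, Q₃ := e₁₂+e₃₄−2e₅₆ (the generators of the subalgebra su_c(2) ⊂ g₂, the centralizer of su(2)). Then the set of spinors ψ ∈ ℝ⁸ with σ(Q₁)ψ = σ(Q₂)ψ = σ(Q₃)ψ = 0 equals ℝ·ψ₁, i.e. su_c(2) preserves only the one spinor ψ₁ (up to scale). -/

import Mathlib

open Matrix BigOperators

noncomputable section

abbrev M8 : Type := Matrix (Fin 8) (Fin 8) ℝ

/-- 2-forms on ℝ⁷ -/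
abbrev Lam2 : Type := AlternatingMap ℝ (Fin 7 → ℝ) ℝ (Fin 2)

/-- 3-forms on ℝ⁷ -/
abbrev Lam3 : Type := AlternatingMap ℝ (Fin 7 → ℝ) ℝ (Fin 3)

/-- standard basis of ℝ⁷ -/
def u (i : Fin 7) : Fin 7 → ℝ := Pi.single i 1

/-- standard spinor basis ψ₁,…,ψ₈ (0-indexed) -/
def ψ (k : Fin 8) : Fin 8 → ℝ := Pi.single k 1

/-- E_{ij} : ψ_i ↦ ψ_j, ψ_j ↦ -ψ_i -/
def EE (i j : Fin 8) : M8 := Matrix.single j i 1 - Matrix.single i j 1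

/-- Clifford multiplication by e₁,…,e₇ (0-indexed) -/
def e : Fin 7 → M8 :=
  ![EE 0 7 + EE 1 6 - EE 2 5 - EE 3 4,
    -EE 0 6 + EE 1 7 + EE 2 4 - EE 3 5,
    -EE 0 5 + EE 1 4 - EE 2 7 + EE 3 6,
    -EE 0 4 - EE 1 5 - EE 2 6 - EE 3 7,
    -EE 0 2 - EE 1 3 + EE 4 6 + EE 5 7,
    EE 0 3 - EE 1 2 - EE 4 7 + EE 5 6,
    EE 0 1 - EE 2 3 - EE 4 5 + EE 6 7]

def pick2 (i j : Fin 7) : (Fin 7 → ℝ) →ₗ[ℝ] (Fin 2 → ℝ) :=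
  LinearMap.pi fun m => LinearMap.proj (![i, j] m)

def pick3 (i j k : Fin 7) : (Fin 7 → ℝ) →ₗ[ℝ] (Fin 3 → ℝ) :=
  LinearMap.pi fun m => LinearMap.proj (![i, j, k] m)

/-- the 2-form e_i ∧ e_j -/
def w2 (i j : Fin 7) : Lam2 :=
  (Matrix.detRowAlternating : AlternatingMap ℝ (Fin 2 → ℝ) ℝ (Fin 2)).compLinearMap (pick2 i j)

/-- the 3-form e_i ∧ e_j ∧ e_k -/
def w3 (i j k : Fin 7) : Lam3 :=
  (Matrix.detRowAlternating : AlternatingMap ℝ (Fin 3 → ℝ) ℝ (Fin 3)).compLinearMap (pick3 i j k)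

/-- Clifford action of a 2-form -/
def σ2 (ω : Lam2) : M8 :=
  ∑ i : Fin 7, ∑ j : Fin 7, if i < j then ω ![u i, u j] • (e i * e j) else 0

/-- Clifford action of a 3-form -/
def σ3 (T : Lam3) : M8 :=
  ∑ i : Fin 7, ∑ j : Fin 7, ∑ k : Fin 7,
    if i < j ∧ j < k then T ![u i, u j, u k] • (e i * e j * e k) else 0

/-- the skew-symmetric 7×7 matrix A_ω associated to a 2-form ω -/
def A2 (ω : Lam2) : Matrix (Fin 7) (Fin 7) ℝ :=
  ∑ i : Fin 7, ∑ j : Fin 7,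
    if i < j then ω ![u i, u j] •
      (Matrix.single j i (1 : ℝ) - Matrix.single i j 1) else 0

/-- T is ω-invariant: the natural action of the 2-form ω on the 3-form T vanishes -/
def inv3 (ω : Lam2) (T : Lam3) : Prop :=
  ∀ X Y Z : Fin 7 → ℝ,
    T ![A2 ω *ᵥ X, Y, Z] + T ![X, A2 ω *ᵥ Y, Z] + T ![X, Y, A2 ω *ᵥ Z] = 0

/-- the standard G₂ 3-form φ = e₁₂₇+e₁₃₅−e₁₄₆−e₂₃₆−e₂₄₅+e₃₄₇+e₅₆₇ -/
def φf : Lam3 :=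
  w3 0 1 6 + w3 0 2 4 - w3 0 3 5 - w3 1 2 5 - w3 1 3 4 + w3 2 3 6 + w3 4 5 6

def Q1f : Lam2 := -w2 0 3 - w2 1 2 + (2:ℝ) • w2 4 6
def Q2f : Lam2 := -w2 0 2 + w2 1 3 + (2:ℝ) • w2 5 6
def Q3f : Lam2 := w2 0 1 + w2 2 3 - (2:ℝ) • w2 4 5

/-!
Each σ(Qₖ) is a combination, with nonzero coefficients, of elementary rotations E_{ij} in three
mutually orthogonal coordinate planes of Δ₇:
σ(Q₁) = 4E₂₃ − 2E₅₈ + 2E₆₇, σ(Q₂) = −4E₂₄ − 2E₅₇ − 2E₆₈, σ(Q₃) = 4E₃₄ − 2E₅₆ + 2E₇₈.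
Hence ker σ(Q₁) = ⟨ψ₁, ψ₄⟩, ker σ(Q₂) = ⟨ψ₁, ψ₃⟩, ker σ(Q₃) = ⟨ψ₁, ψ₂⟩, and the common kernel is ℝψ₁.
Indices in the code start at 0, so `EE 1 2` is E₂₃ and `ψ 0` is ψ₁.
-/

theorem Submodule.mem_span_pi_single_iff {R ι : Type*} [Semiring R] [DecidableEq ι] (i : ι)
    (v : ι → R) : v ∈ Submodule.span R {Pi.single i 1} ↔ ∀ k ≠ i, v k = 0 := by
  rw [Submodule.mem_span_singleton]
  constructor
  · rintro ⟨c, rfl⟩ k hk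
    simp [hk]
  · intro h
    exact ⟨v i, funext fun k => by by_cases hk : k = i <;> simp [hk, h]⟩

lemma w2_apply (i j : Fin 7) (x y : Fin 7 → ℝ) :
    w2 i j ![x, y] = x i * y j - x j * y i := by
  change Matrix.det (Matrix.of fun m k => ![x, y] m (![i, j] k)) = _
  simp [Matrix.det_fin_two]

def σ2Linear : Lam2 →ₗ[ℝ] M8 where
  toFun := σ2
  map_add' ω η := by
    simp only [σ2, AlternatingMap.add_apply, add_smul, ← Finset.sum_add_distrib]
    congr! 2 with i - j -
    split_ifs <;> simp
  map_smul' c ω := by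
    simp only [σ2, AlternatingMap.smul_apply, smul_eq_mul, mul_smul, Finset.smul_sum,
      RingHom.id_apply]
    congr! 2 with i - j -
    split_ifs <;> simp

@[simp] lemma σ2Linear_apply (ω : Lam2) : σ2Linear ω = σ2 ω := rfl

lemma σ2_w2 {i j : Fin 7} (hij : i < j) : σ2 (w2 i j) = e i * e j := by
  have term (a b : Fin 7) : (if a < b then w2 i j ![u a, u b] • (e a * e b) else 0)
      = if i = a then (if j = b then e a * e b else 0) else 0 := by
    simp only [w2_apply, u, Pi.single_apply]
    split_ifs <;> subst_vars <;> first | (exfalso; order) | simp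
  simp [σ2, term]

lemma σ2_Q1f : σ2 Q1f = (4 : ℝ) • EE 1 2 - (2 : ℝ) • EE 4 7 + (2 : ℝ) • EE 5 6 := by
  rw [← σ2Linear_apply]
  simp only [Q1f, map_add, map_sub, map_neg, map_smul, σ2Linear_apply, σ2_w2, Fin.reduceLT]
  simp only [e, EE, Matrix.cons_val, mul_add, add_mul, mul_sub, sub_mul, neg_mul, mul_neg,
    single_mul_single_same, mul_one, ne_eq, Fin.reduceEq, not_false_eq_true,
    single_mul_single_of_ne, neg_zero, sub_zero, zero_sub, add_zero, zero_add]
  module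

lemma σ2_Q2f : σ2 Q2f = (-4 : ℝ) • EE 1 3 - (2 : ℝ) • EE 4 6 - (2 : ℝ) • EE 5 7 := by
  rw [← σ2Linear_apply]
  simp only [Q2f, map_add, map_neg, map_smul, σ2Linear_apply, σ2_w2, Fin.reduceLT]
  simp only [e, EE, Matrix.cons_val, mul_add, add_mul, mul_sub, sub_mul, neg_mul, mul_neg,
    single_mul_single_same, mul_one, ne_eq, Fin.reduceEq, not_false_eq_true,
    single_mul_single_of_ne, neg_zero, sub_zero, zero_sub, add_zero, zero_add]
  module

lemma σ2_Q3f : σ2 Q3f = (4 : ℝ) • EE 2 3 - (2 : ℝ) • EE 4 5 + (2 : ℝ) • EE 6 7 := by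
  rw [← σ2Linear_apply]
  simp only [Q3f, map_add, map_sub, map_smul, σ2Linear_apply, σ2_w2, Fin.reduceLT]
  simp only [e, EE, Matrix.cons_val, mul_add, add_mul, mul_sub, sub_mul, neg_mul, mul_neg,
    single_mul_single_same, mul_one, ne_eq, Fin.reduceEq, not_false_eq_true,
    single_mul_single_of_ne, neg_zero, sub_zero, zero_sub, add_zero, zero_add]
  module

lemma EE_mulVec_apply (i j k : Fin 8) (v : Fin 8 → ℝ) :
    (EE i j *ᵥ v) k = (if k = j then v i else 0) - (if k = i then v j else 0) := by
  simp [EE, sub_mulVec, single_mulVec, Function.update_apply]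

lemma σ2_Q1f_mulVec_eq_zero_iff (v : Fin 8 → ℝ) :
    σ2 Q1f *ᵥ v = 0 ↔ v 1 = 0 ∧ v 2 = 0 ∧ v 4 = 0 ∧ v 5 = 0 ∧ v 6 = 0 ∧ v 7 = 0 := by
  simp [and_assoc, and_comm, and_left_comm, funext_iff, Fin.forall_fin_succ, σ2_Q1f,
    add_mulVec, sub_mulVec, smul_mulVec, EE_mulVec_apply]

lemma σ2_Q2f_mulVec_eq_zero_iff (v : Fin 8 → ℝ) :
    σ2 Q2f *ᵥ v = 0 ↔ v 1 = 0 ∧ v 3 = 0 ∧ v 4 = 0 ∧ v 5 = 0 ∧ v 6 = 0 ∧ v 7 = 0 := by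
  simp [and_assoc, and_comm, and_left_comm, funext_iff, Fin.forall_fin_succ, σ2_Q2f,
    sub_mulVec, neg_mulVec, smul_mulVec, EE_mulVec_apply]

lemma σ2_Q3f_mulVec_eq_zero_iff (v : Fin 8 → ℝ) :
    σ2 Q3f *ᵥ v = 0 ↔ v 2 = 0 ∧ v 3 = 0 ∧ v 4 = 0 ∧ v 5 = 0 ∧ v 6 = 0 ∧ v 7 = 0 := by
  simp [and_comm, and_left_comm, funext_iff, Fin.forall_fin_succ, σ2_Q3f,
    add_mulVec, sub_mulVec, smul_mulVec, EE_mulVec_apply]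

/-- the spinors annihilated by σ(Q₁), σ(Q₂), σ(Q₃) are exactly ℝ·ψ₁. -/
theorem stmt_12 :
    {v : Fin 8 → ℝ | σ2 Q1f *ᵥ v = 0 ∧ σ2 Q2f *ᵥ v = 0 ∧ σ2 Q3f *ᵥ v = 0}
      = ↑(Submodule.span ℝ {ψ 0}) := by
  ext v
  simp only [Set.mem_ofPred_eq, SetLike.mem_coe, ψ, Submodule.mem_span_pi_single_iff,
    σ2_Q1f_mulVec_eq_zero_iff, σ2_Q2f_mulVec_eq_zero_iff, σ2_Q3f_mulVec_eq_zero_iff]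
  constructor
  · rintro ⟨⟨h1, h2, h4, h5, h6, h7⟩, ⟨-, h3, -⟩, -⟩ k hk
    fin_cases k <;> first | assumption | exact absurd rfl hk
  · intro h
    refine ⟨?_, ?_, ?_⟩ <;> simp [h]
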